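/- arXiv:1806.08849 — 5 statements merged into one kernel-verified Lean document; each statement's English description precedes it below -/
import Mathlib

section
/- For all positive integers k and m there exists a constant C = C(m, k) such that the following holds: for every red–blue colouring of ℤ containing no (2,k)-AP and every integer d ≥ 1 such that [0, d] is a gap, the number of red integers in the interval [0, m·d] is at most C. -/
/-- A red–blue colouring of ℤ (red set `R`, blue its complement) contains an `(a,b)`-AP:
an arithmetic progression `x, x+d, …, x+(a+b−1)d` with `d ≠ 0` whose first `a` terms are
red and whose last `b` terms are blue. -/
def HasAPZ (R : Set ℤ) (a b : ℕ) : Prop :=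
  ∃ x d : ℤ, d ≠ 0 ∧
    (∀ i : ℕ, i < a → x + (i : ℤ) * d ∈ R) ∧
    (∀ i : ℕ, a ≤ i → i < a + b → x + (i : ℤ) * d ∉ R)

/-- `[u, v]` is a gap: `u < v`, `u` and `v` are red, and all integers strictly between
`u` and `v` are blue. -/
def IsGap (R : Set ℤ) (u v : ℤ) : Prop :=
  u < v ∧ u ∈ R ∧ v ∈ R ∧ ∀ n : ℤ, u < n → n < v → n ∉ R

/-!
If `y < x` are red, the progression `x, y, y - (x - y), …` shows that one of the `k` points
`y - j (x - y)`, `1 ≤ j ≤ k`, is red. Hence, once `x₀` is the first red point to the right of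
`t`, every later red point `x` of a window `(t, t + w]` with `k (w - 1) ≤ t` is determined by
some `j ≤ k` and a red point of `[0, t]`, so the window holds at most `k r + 1` red points,
where `r` counts the red points of `[0, t]`. Starting from a gap `[0, d]` (two red points) and
taking windows of length `w = ⌊d / k⌋ + 1`, `k m` windows cover `[0, m d]`, which therefore
holds at most `3 (k + 2) ^ (k m)` red points.
-/

open Finset

section Colouring

variable {R : Set ℤ} {k : ℕ}

lemma exists_red_reflection (hAP : ¬ HasAPZ R 2 k) {x y : ℤ} (hy : y ∈ R) (hx : x ∈ R)
    (hyx : y < x) : ∃ j ∈ Icc 1 k, y - (j : ℤ) * (x - y) ∈ R := by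
  by_contra! h
  refine hAP ⟨x, y - x, by omega, fun i hi => ?_, fun i hi2 hik => ?_⟩
  · interval_cases i <;> simpa
  · obtain ⟨j, rfl⟩ : ∃ j, i = j + 1 := ⟨i - 1, by omega⟩
    convert h j (mem_Icc.2 ⟨by omega, by omega⟩) using 2
    push_cast
    ring

open Classical in
noncomputable def redsIn (R : Set ℤ) (a b : ℤ) : Finset ℤ := (Icc a b).filter (· ∈ R)

variable {a b t w : ℤ}

lemma mem_redsIn {x : ℤ} : x ∈ redsIn R a b ↔ (a ≤ x ∧ x ≤ b) ∧ x ∈ R := by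
  simp [redsIn]

lemma coe_redsIn : (redsIn R a b : Set ℤ) = Set.Icc a b ∩ R := by
  ext x
  simp [mem_redsIn]

lemma redsIn_mono_right {b' : ℤ} (h : b ≤ b') : redsIn R a b ⊆ redsIn R a b' := fun x hx => by
  rw [mem_redsIn] at hx ⊢
  exact ⟨⟨hx.1.1, hx.1.2.trans h⟩, hx.2⟩

lemma card_redsIn_le_two_of_isGap (h : IsGap R a b) : #(redsIn R a b) ≤ 2 := by
  obtain ⟨-, -, -, hblue⟩ := h
  have hsub : redsIn R a b ⊆ {a, b} := fun x hx => by
    obtain ⟨⟨hax, hxb⟩, hxR⟩ := mem_redsIn.1 hx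
    rcases hax.eq_or_lt with rfl | hax
    · simp
    rcases hxb.eq_or_lt with rfl | hxb
    · simp
    exact absurd hxR (hblue x hax hxb)
  exact (card_le_card hsub).trans card_le_two

lemma card_redsIn_window_le (hAP : ¬ HasAPZ R 2 k) (hw : k * (w - 1) ≤ t) :
    #(redsIn R (t + 1) (t + w)) ≤ k * #(redsIn R 0 t) + 1 := by
  set A := redsIn R (t + 1) (t + w)
  rcases A.eq_empty_or_nonempty with hA | hA
  · simp [hA]
  set x₀ := A.min' hA
  have hx₀ := mem_redsIn.1 (A.min'_mem hA)
  have hsurj : Set.SurjOn (fun p : ℕ × ℤ => x₀ + (x₀ - p.2) / p.1)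
      (Icc 1 k ×ˢ redsIn R 0 t : Finset _) (A.erase x₀ : Finset _) := by
    intro x hx
    obtain ⟨hne, hxA⟩ := mem_erase.1 hx
    have hlt : x₀ < x := (A.min'_le x hxA).lt_of_ne' hne
    have hx := mem_redsIn.1 hxA
    obtain ⟨j, hj, hz⟩ := exists_red_reflection hAP hx₀.2 hx.2 hlt
    obtain ⟨hj1, hjk⟩ := mem_Icc.1 hj
    have hjpos : (0 : ℤ) < j := by exact_mod_cast hj1
    have hstep_pos : 0 < (j : ℤ) * (x - x₀) := mul_pos hjpos (by omega)
    have hstep_le : (j : ℤ) * (x - x₀) ≤ t :=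
      calc (j : ℤ) * (x - x₀) ≤ k * (w - 1) :=
            mul_le_mul (by exact_mod_cast hjk) (by omega) (by omega) (by positivity)
        _ ≤ t := hw
    -- the reflected point lies left of `x₀`, hence outside the window by minimality of `x₀`
    have hz_le : x₀ - j * (x - x₀) ≤ t := by
      by_contra! hzt
      have := A.min'_le _ (mem_redsIn.2 ⟨⟨hzt, by omega⟩, hz⟩)
      omega
    refine ⟨(j, x₀ - j * (x - x₀)), mem_product.2 ⟨hj, mem_redsIn.2 ⟨⟨by omega, hz_le⟩, hz⟩⟩, ?_⟩
    simp only [sub_sub_cancel, Int.mul_ediv_cancel_left _ hjpos.ne']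
    ring
  have := card_le_card_of_surjOn _ hsurj
  rw [card_product, Nat.card_Icc, Nat.add_sub_cancel, card_erase_of_mem (A.min'_mem hA)] at this
  omega

lemma card_redsIn_add_le (hAP : ¬ HasAPZ R 2 k) (hw : k * (w - 1) ≤ t) :
    #(redsIn R 0 (t + w)) ≤ (k + 1) * #(redsIn R 0 t) + 1 := by
  have hsub : redsIn R 0 (t + w) ⊆ redsIn R 0 t ∪ redsIn R (t + 1) (t + w) := fun x hx => by
    obtain ⟨⟨h0x, hxw⟩, hxR⟩ := mem_redsIn.1 hx
    rcases le_or_gt x t with hxt | hxt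
    · exact mem_union_left _ (mem_redsIn.2 ⟨⟨h0x, hxt⟩, hxR⟩)
    · exact mem_union_right _ (mem_redsIn.2 ⟨⟨hxt, hxw⟩, hxR⟩)
  calc #(redsIn R 0 (t + w)) ≤ #(redsIn R 0 t) + #(redsIn R (t + 1) (t + w)) :=
        (card_le_card hsub).trans (card_union_le _ _)
    _ ≤ (k + 1) * #(redsIn R 0 t) + 1 := by
        linarith [card_redsIn_window_le hAP hw]

lemma card_redsIn_add_mul_lt (hAP : ¬ HasAPZ R 2 k) (hw0 : 0 ≤ w) (hw : k * (w - 1) ≤ t)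
    (n : ℕ) : #(redsIn R 0 (t + n * w)) < (k + 2) ^ n * (#(redsIn R 0 t) + 1) := by
  induction n with
  | zero => simp
  | succ n ih =>
    have hstep := card_redsIn_add_le hAP (t := t + n * w) (hw.trans (by nlinarith))
    rw [show t + ↑(n + 1) * w = t + n * w + w by push_cast; ring, pow_succ]
    nlinarith

end Colouring

theorem statement8_general (k m : ℕ) (hk : 0 < k) :
    ∃ C : ℕ, ∀ R : Set ℤ, ¬ HasAPZ R 2 k →
      ∀ d : ℤ, 1 ≤ d → IsGap R 0 d →
        (Set.Icc (0 : ℤ) ((m : ℤ) * d) ∩ R).ncard ≤ C := by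
  refine ⟨(k + 2) ^ (k * m) * 3, fun R hAP d hd hgap => ?_⟩
  set w := d / k + 1
  have hw : k * (w - 1) ≤ d := by
    simpa [w] using Int.mul_ediv_self_le (x := d) (k := k) (by omega)
  have hkw : d < k * w := by
    have := Int.emod_lt_of_pos d (by omega : (0 : ℤ) < k)
    have := Int.mul_ediv_add_emod d k
    simp only [w, mul_add, mul_one]
    omega
  have hmd : m * d ≤ d + (k * m : ℕ) * w := by
    push_cast
    nlinarith
  rw [← coe_redsIn, Set.ncard_coe_finset]
  calc #(redsIn R 0 (m * d)) ≤ #(redsIn R 0 (d + (k * m : ℕ) * w)) :=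
        card_le_card (redsIn_mono_right hmd)
    _ ≤ (k + 2) ^ (k * m) * (#(redsIn R 0 d) + 1) :=
        (card_redsIn_add_mul_lt hAP (by positivity) hw _).le
    _ ≤ (k + 2) ^ (k * m) * 3 := by
        gcongr
        linarith [card_redsIn_le_two_of_isGap hgap]

/-- For all positive integers k and m there is C = C(m,k) such that for
every colouring of ℤ with no (2,k)-AP and every d ≥ 1 with [0, d] a gap, the number of
red integers in [0, m·d] is at most C. -/
theorem statement8 (k m : ℕ) (hk : 0 < k) (hm : 0 < m) :
    ∃ C : ℕ, ∀ R : Set ℤ, ¬ HasAPZ R 2 k →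
      ∀ d : ℤ, 1 ≤ d → IsGap R 0 d →
        (Set.Icc (0 : ℤ) ((m : ℤ) * d) ∩ R).ncard ≤ C :=
  statement8_general k m hk
end

section
/- For every positive integer k, every red–blue colouring of ℤ containing no (2,k)-AP, and every integer d ≥ 1 such that [0, d] is a gap, the following holds for every integer n ≥ 1: there exists an integer j with n ≤ j ≤ (k+1)n such that jd is red, and there exists an integer j with n ≤ j ≤ (k+1)n such that −jd is red. -/
/-- Key combinatorial lemma: if a set of integers has an element in [1,K] and each
element m ≥ 1 spawns another element in [2m,(K+1)m], then it hits [n,(K+1)n] for all n ≥ 1. -/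
lemma key_lemma (K : ℤ) (hK : 1 ≤ K) (S : Set ℤ)
    (base : ∃ m, m ∈ S ∧ 1 ≤ m ∧ m ≤ K)
    (chain : ∀ m, m ∈ S → 1 ≤ m → ∃ j, j ∈ S ∧ 2 * m ≤ j ∧ j ≤ (K + 1) * m) :
    ∀ n : ℤ, 1 ≤ n → ∃ j, j ∈ S ∧ n ≤ j ∧ j ≤ (K + 1) * n := by
  intro n hn
  obtain ⟨m₀, hm₀S, hm₀1, hm₀K⟩ := base
  by_cases hle : m₀ ≤ n
  · -- take the greatest element of S in [1,n]
    obtain ⟨m, ⟨hmS, hm1, hmn⟩, hmax⟩ :=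
      Int.exists_greatest_of_bdd (P := fun z => z ∈ S ∧ 1 ≤ z ∧ z ≤ n)
        ⟨n, fun z hz => hz.2.2⟩ ⟨m₀, hm₀S, hm₀1, hle⟩
    obtain ⟨j, hjS, hj1, hj2⟩ := chain m hmS hm1
    refine ⟨j, hjS, ?_, ?_⟩
    · by_contra h
      push_neg at h
      have := hmax j ⟨hjS, by nlinarith, le_of_lt h⟩
      nlinarith
    · nlinarith
  · push_neg at hle
    exact ⟨m₀, hm₀S, le_of_lt hle, by nlinarith⟩

/-- For every positive integer k, every colouring of ℤ with no (2,k)-AP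
and every integer d ≥ 1 with [0, d] a gap, for every n ≥ 1 there is j with
n ≤ j ≤ (k+1)n and jd red, and there is j with n ≤ j ≤ (k+1)n and −jd red. -/
theorem statement11 (k : ℕ) (hk : 0 < k) (R : Set ℤ) (hR : ¬ HasAPZ R 2 k)
    (d : ℤ) (hd : 1 ≤ d) (hgap : IsGap R 0 d) (n : ℤ) (hn : 1 ≤ n) :
    (∃ j : ℤ, n ≤ j ∧ j ≤ ((k : ℤ) + 1) * n ∧ j * d ∈ R) ∧
    (∃ j : ℤ, n ≤ j ∧ j ≤ ((k : ℤ) + 1) * n ∧ -j * d ∈ R) := by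
  obtain ⟨-, h0, hdR, -⟩ := hgap
  have hk1 : (1 : ℤ) ≤ (k : ℤ) := by exact_mod_cast hk
  -- chain for the positive direction
  have chainP : ∀ m : ℤ, m ∈ {m : ℤ | m * d ∈ R} → 1 ≤ m →
      ∃ j, j ∈ {m : ℤ | m * d ∈ R} ∧ 2 * m ≤ j ∧ j ≤ ((k : ℤ) + 1) * m := by
    intro m hmR hm1
    by_contra hc
    push_neg at hc
    apply hR
    refine ⟨0, m * d, by positivity, ?_, ?_⟩
    · intro i hi
      interval_cases i
      · simpa using h0
      · simpa using hmR
    · intro i hi2 hik hmem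
      have hik' : (i : ℤ) ≤ (k : ℤ) + 1 := by
        have : i < 2 + k := hik; omega
      have hi2' : (2 : ℤ) ≤ (i : ℤ) := by exact_mod_cast hi2
      have : ((i : ℤ) * m) * d ∈ R := by
        have : (0 : ℤ) + (i : ℤ) * (m * d) = ((i : ℤ) * m) * d := by ring
        rwa [this] at hmem
      have := hc ((i : ℤ) * m) this (by nlinarith)
      nlinarith
  -- chain for the negative direction
  have chainN : ∀ m : ℤ, m ∈ {m : ℤ | -m * d ∈ R} → 1 ≤ m →
      ∃ j, j ∈ {m : ℤ | -m * d ∈ R} ∧ 2 * m ≤ j ∧ j ≤ ((k : ℤ) + 1) * m := by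
    intro m hmR hm1
    by_contra hc
    push_neg at hc
    apply hR
    refine ⟨0, -m * d, ?_, ?_, ?_⟩
    · intro h
      have : m * d = 0 := by linarith [neg_eq_zero.mp (by linarith [h] : -(m*d) = 0)]
      nlinarith
    · intro i hi
      interval_cases i
      · simpa using h0
      · simpa using hmR
    · intro i hi2 hik hmem
      have hik' : (i : ℤ) ≤ (k : ℤ) + 1 := by
        have : i < 2 + k := hik; omega
      have hi2' : (2 : ℤ) ≤ (i : ℤ) := by exact_mod_cast hi2
      have : -((i : ℤ) * m) * d ∈ R := by
        have : (0 : ℤ) + (i : ℤ) * (-m * d) = -((i : ℤ) * m) * d := by ring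
        rwa [this] at hmem
      have := hc ((i : ℤ) * m) this (by nlinarith)
      nlinarith
  -- base for the negative direction: from the AP d, 0, -d, ..., -kd
  have baseN : ∃ m, m ∈ {m : ℤ | -m * d ∈ R} ∧ 1 ≤ m ∧ m ≤ (k : ℤ) := by
    by_contra hc
    push_neg at hc
    apply hR
    refine ⟨d, -d, by intro h; simp at h; omega, ?_, ?_⟩
    · intro i hi
      interval_cases i
      · simpa using hdR
      · simpa using h0
    · intro i hi2 hik hmem
      have hik' : (i : ℤ) ≤ (k : ℤ) + 1 := by
        have : i < 2 + k := hik; omega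
      have hi2' : (2 : ℤ) ≤ (i : ℤ) := by exact_mod_cast hi2
      have hmem' : -((i : ℤ) - 1) * d ∈ R := by
        have : d + (i : ℤ) * (-d) = -((i : ℤ) - 1) * d := by ring
        rwa [this] at hmem
      have := hc ((i : ℤ) - 1) hmem' (by linarith)
      linarith
  constructor
  · obtain ⟨j, hjS, hj1, hj2⟩ := key_lemma (k : ℤ) hk1 {m : ℤ | m * d ∈ R}
      ⟨1, by simpa using hdR, le_refl 1, hk1⟩ chainP n hn
    exact ⟨j, hj1, hj2, hjS⟩
  · obtain ⟨j, hjS, hj1, hj2⟩ := key_lemma (k : ℤ) hk1 {m : ℤ | -m * d ∈ R}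
      baseN chainN n hn
    exact ⟨j, hj1, hj2, hjS⟩
end

section
/- For every real number a and every real number d with 1/4 ≤ d ≤ 5/16, there exists an integer t with 0 ≤ t ≤ 6 such that the fractional part of a + t·d lies in the closed interval [1/2, 3/4]. -/
lemma fract_key (x : ℝ) (k : ℤ) (h1 : (k : ℝ) + 1/2 ≤ x) (h2 : x ≤ (k : ℝ) + 3/4) :
    Int.fract x ∈ Set.Icc (1/2 : ℝ) (3/4) := by
  have h : Int.fract x = x - k := by
    rw [← Int.fract_sub_intCast x k]
    exact Int.fract_eq_self.mpr ⟨by linarith, by linarith⟩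
  rw [h]
  exact ⟨by linarith, by linarith⟩

/-- For every real a and every real d with 1/4 ≤ d ≤ 5/16, there is an
integer t with 0 ≤ t ≤ 6 such that the fractional part of a + t·d lies in [1/2, 3/4]. -/
theorem statement16 (a d : ℝ) (hd₁ : 1 / 4 ≤ d) (hd₂ : d ≤ 5 / 16) :
    ∃ t : ℕ, t ≤ 6 ∧ Int.fract (a + (t : ℝ) * d) ∈ Set.Icc (1 / 2 : ℝ) (3 / 4) := by
  set c := Int.fract a with hc
  have hc0 : 0 ≤ c := Int.fract_nonneg a
  have hc1 : c < 1 := Int.fract_lt_one a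
  have hfr : ∀ t : ℕ, Int.fract (a + (t : ℝ) * d) = Int.fract (c + (t : ℝ) * d) := by
    intro t
    have : a + (t : ℝ) * d = (⌊a⌋ : ℝ) + (c + (t : ℝ) * d) := by
      rw [hc]; unfold Int.fract; ring
    rw [this, Int.fract_intCast_add]
  rcases le_or_gt c (1/2) with hcase | hcase
  · -- c ≤ 1/2, target value v = 1/2 - c ∈ [0, 1/2]
    rcases le_or_gt (1/2 - c) (4*d - 1) with h4 | h4
    · exact ⟨4, by norm_num, by rw [hfr]; exact fract_key _ 1 (by push_cast; linarith) (by push_cast; linarith)⟩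
    rcases le_or_gt (1/2 - c) d with h1 | h1
    · exact ⟨1, by norm_num, by rw [hfr]; exact fract_key _ 0 (by push_cast; linarith) (by push_cast; linarith)⟩
    rcases le_or_gt (1/2 - c) (5*d - 1) with h5 | h5
    · exact ⟨5, by norm_num, by rw [hfr]; exact fract_key _ 1 (by push_cast; linarith) (by push_cast; linarith)⟩
    rcases le_or_gt (1/2 - c) (2*d) with h2 | h2
    · exact ⟨2, by norm_num, by rw [hfr]; exact fract_key _ 0 (by push_cast; linarith) (by push_cast; linarith)⟩
    rcases le_or_gt (1/2 - c) (6*d - 1) with h6 | h6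
    · exact ⟨6, by norm_num, by rw [hfr]; exact fract_key _ 1 (by push_cast; linarith) (by push_cast; linarith)⟩
    · exact ⟨3, by norm_num, by rw [hfr]; exact fract_key _ 0 (by push_cast; linarith) (by push_cast; linarith)⟩
  · -- c > 1/2, target value v = 3/2 - c ∈ (1/2, 1)
    rcases le_or_gt (3/2 - c) (5*d - 1) with h5 | h5
    · exact ⟨5, by norm_num, by rw [hfr]; exact fract_key _ 2 (by push_cast; linarith) (by push_cast; linarith)⟩
    rcases le_or_gt (3/2 - c) (2*d) with h2 | h2
    · exact ⟨2, by norm_num, by rw [hfr]; exact fract_key _ 1 (by push_cast; linarith) (by push_cast; linarith)⟩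
    rcases le_or_gt (3/2 - c) (6*d - 1) with h6 | h6
    · exact ⟨6, by norm_num, by rw [hfr]; exact fract_key _ 2 (by push_cast; linarith) (by push_cast; linarith)⟩
    rcases le_or_gt (3/2 - c) (3*d) with h3 | h3
    · exact ⟨3, by norm_num, by rw [hfr]; exact fract_key _ 1 (by push_cast; linarith) (by push_cast; linarith)⟩
    · exact ⟨0, by norm_num, by rw [hfr]; exact fract_key _ 0 (by push_cast; linarith) (by push_cast; linarith)⟩
end

section
/- For every real number a and every real number d with 5/16 ≤ d ≤ 7/20, either there exists an integer t with 0 ≤ t ≤ 2 such that the fractional part of a + t·d lies in [1/2, 3/4], or there exists an integer t with 3 ≤ t ≤ 5 such that the fractional part of a + t·d lies in [0, 1/4]. -/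
lemma frac_shift (y : ℝ) (n : ℤ) (h0 : 0 ≤ y - n) (h1 : y - n < 1) :
    Int.fract y = y - n := by
  rw [← Int.fract_sub_intCast y n]
  exact Int.fract_eq_self.2 ⟨h0, h1⟩

/-- For every real a and every real d with 5/16 ≤ d ≤ 7/20, either there is
an integer t with 0 ≤ t ≤ 2 such that the fractional part of a + t·d lies in [1/2, 3/4],
or there is an integer t with 3 ≤ t ≤ 5 such that the fractional part of a + t·d lies in
[0, 1/4]. -/
theorem statement17 (a d : ℝ) (hd₁ : 5 / 16 ≤ d) (hd₂ : d ≤ 7 / 20) :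
    (∃ t : ℕ, t ≤ 2 ∧ Int.fract (a + (t : ℝ) * d) ∈ Set.Icc (1 / 2 : ℝ) (3 / 4)) ∨
    (∃ t : ℕ, 3 ≤ t ∧ t ≤ 5 ∧ Int.fract (a + (t : ℝ) * d) ∈ Set.Icc (0 : ℝ) (1 / 4)) := by
  set x := Int.fract a with hxdef
  have hx0 : 0 ≤ x := Int.fract_nonneg a
  have hx1 : x < 1 := Int.fract_lt_one a
  have key : ∀ t : ℕ, Int.fract (a + (t : ℝ) * d) = Int.fract (x + (t : ℝ) * d) := by
    intro t
    conv_lhs => rw [← Int.floor_add_fract a, add_assoc]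
    rw [Int.fract_intCast_add]
  rcases le_or_gt x (3 / 4 - 2 * d) with h1 | h1
  · -- t = 2, fract = x + 2d ∈ [1/2, 3/4]
    refine Or.inl ⟨2, by norm_num, ?_⟩
    rw [key, show ((2 : ℕ) : ℝ) = 2 by norm_num]
    rw [Int.fract_eq_self.2 ⟨by linarith, by linarith⟩]
    constructor <;> linarith
  rcases le_or_gt x (5 / 4 - 3 * d) with h2 | h2
  · -- t = 3, fract = x + 3d - 1 ∈ [0, 1/4]
    refine Or.inr ⟨3, le_refl _, by norm_num, ?_⟩
    rw [key, show ((3 : ℕ) : ℝ) = 3 by norm_num]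
    rw [frac_shift _ 1 (by push_cast; linarith) (by push_cast; linarith)]
    constructor <;> [push_cast; push_cast] <;> linarith
  rcases le_or_gt x (3 / 4 - d) with h3 | h3
  · -- t = 1, fract = x + d ∈ [1/2, 3/4]
    refine Or.inl ⟨1, by norm_num, ?_⟩
    rw [key, show ((1 : ℕ) : ℝ) = 1 by norm_num]
    rw [Int.fract_eq_self.2 ⟨by linarith, by linarith⟩]
    constructor <;> linarith
  rcases le_or_gt x (9 / 4 - 5 * d) with h4 | h4
  · -- t = 5, fract = x + 5d - 2 ∈ [0, 1/4]
    refine Or.inr ⟨5, by norm_num, le_refl _, ?_⟩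
    rw [key, show ((5 : ℕ) : ℝ) = 5 by norm_num]
    rw [frac_shift _ 2 (by push_cast; linarith) (by push_cast; linarith)]
    constructor <;> [push_cast; push_cast] <;> linarith
  rcases le_or_gt x (3 / 4) with h5 | h5
  · -- t = 0, fract = x ∈ [1/2, 3/4]
    refine Or.inl ⟨0, by norm_num, ?_⟩
    rw [key, show ((0 : ℕ) : ℝ) = 0 by norm_num]
    rw [zero_mul, add_zero, Int.fract_fract]
    constructor <;> linarith
  rcases le_or_gt x (9 / 4 - 4 * d) with h6 | h6
  · -- t = 4, fract = x + 4d - 2 ∈ [0, 1/4]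
    refine Or.inr ⟨4, by norm_num, by norm_num, ?_⟩
    rw [key, show ((4 : ℕ) : ℝ) = 4 by norm_num]
    rw [frac_shift _ 2 (by push_cast; linarith) (by push_cast; linarith)]
    constructor <;> [push_cast; push_cast] <;> linarith
  · -- t = 2, fract = x + 2d - 1 ∈ [1/2, 3/4]
    refine Or.inl ⟨2, by norm_num, ?_⟩
    rw [key, show ((2 : ℕ) : ℝ) = 2 by norm_num]
    rw [frac_shift _ 1 (by push_cast; linarith) (by push_cast; linarith)]
    constructor <;> [push_cast; push_cast] <;> linarith
end

section
/- For every real number a and every real number d with 7/20 ≤ d ≤ 2/5, there exists an integer t with 0 ≤ t ≤ 7 such that the fractional part of a + t·d lies in the closed interval [1/2, 3/4]. -/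
lemma key18 (a d : ℝ) (t : ℕ) (k : ℤ)
    (h1 : 1/2 ≤ Int.fract a + (t : ℝ) * d - k)
    (h2 : Int.fract a + (t : ℝ) * d - k ≤ 3/4) :
    Int.fract (a + (t : ℝ) * d) ∈ Set.Icc (1 / 2 : ℝ) (3 / 4) := by
  have heq : a + (t : ℝ) * d = (⌊a⌋ : ℝ) + (Int.fract a + (t : ℝ) * d) := by
    unfold Int.fract; ring
  rw [heq, Int.fract_intCast_add]
  have : Int.fract (Int.fract a + (t : ℝ) * d) = Int.fract a + (t : ℝ) * d - k := by
    rw [Int.fract_eq_iff]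
    exact ⟨by linarith, by linarith, k, by ring⟩
  rw [this]
  exact ⟨h1, h2⟩

/-- For every real a and every real d with 7/20 ≤ d ≤ 2/5, there is an
integer t with 0 ≤ t ≤ 7 such that the fractional part of a + t·d lies in [1/2, 3/4]. -/
theorem statement18 (a d : ℝ) (hd₁ : 7 / 20 ≤ d) (hd₂ : d ≤ 2 / 5) :
    ∃ t : ℕ, t ≤ 7 ∧ Int.fract (a + (t : ℝ) * d) ∈ Set.Icc (1 / 2 : ℝ) (3 / 4) := by
  set x := Int.fract a with hxdef
  have hx0 : 0 ≤ x := Int.fract_nonneg a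
  have hx1 : x < 1 := Int.fract_lt_one a
  rcases le_or_gt d (3/8) with hd | hd
  · -- d ∈ [7/20, 3/8]
    rcases le_or_gt x (3/4 - 2*d) with h1 | h1
    · exact ⟨2, by norm_num, key18 a d 2 0 (by push_cast; linarith) (by push_cast; linarith)⟩
    rcases le_or_gt x (11/4 - 7*d) with h2 | h2
    · exact ⟨7, by norm_num, key18 a d 7 2 (by push_cast; linarith) (by push_cast; linarith)⟩
    rcases le_or_gt x (3/4 - d) with h3 | h3
    · exact ⟨1, by norm_num, key18 a d 1 0 (by push_cast; linarith) (by push_cast; linarith)⟩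
    rcases le_or_gt x (11/4 - 6*d) with h4 | h4
    · exact ⟨6, by norm_num, key18 a d 6 2 (by push_cast; linarith) (by push_cast; linarith)⟩
    rcases le_or_gt x (7/4 - 3*d) with h5 | h5
    · exact ⟨3, by norm_num, key18 a d 3 1 (by push_cast; linarith) (by push_cast; linarith)⟩
    rcases le_or_gt x (3/4) with h6 | h6
    · exact ⟨0, by norm_num, key18 a d 0 0 (by push_cast; linarith) (by push_cast; linarith)⟩
    rcases le_or_gt x (11/4 - 5*d) with h7 | h7
    · exact ⟨5, by norm_num, key18 a d 5 2 (by push_cast; linarith) (by push_cast; linarith)⟩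
    · exact ⟨2, by norm_num, key18 a d 2 1 (by push_cast; linarith) (by push_cast; linarith)⟩
  · -- d ∈ (3/8, 2/5]
    rcases le_or_gt x (7/4 - 4*d) with h1 | h1
    · exact ⟨4, by norm_num, key18 a d 4 1 (by push_cast; linarith) (by push_cast; linarith)⟩
    rcases le_or_gt x (3/4 - d) with h2 | h2
    · exact ⟨1, by norm_num, key18 a d 1 0 (by push_cast; linarith) (by push_cast; linarith)⟩
    rcases le_or_gt x (7/4 - 3*d) with h3 | h3
    · exact ⟨3, by norm_num, key18 a d 3 1 (by push_cast; linarith) (by push_cast; linarith)⟩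
    rcases le_or_gt x (3/4) with h4 | h4
    · exact ⟨0, by norm_num, key18 a d 0 0 (by push_cast; linarith) (by push_cast; linarith)⟩
    rcases le_or_gt x (7/4 - 2*d) with h5 | h5
    · exact ⟨2, by norm_num, key18 a d 2 1 (by push_cast; linarith) (by push_cast; linarith)⟩
    · exact ⟨4, by norm_num, key18 a d 4 2 (by push_cast; linarith) (by push_cast; linarith)⟩
end
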